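/- arXiv:2605.15017 — 3 statements merged into one kernel-verified Lean document; each statement's English description precedes it below -/
import Mathlib

section
/- If there exist eigenvectors φ_1, ..., φ_r of the Laplacian L of a graph G, all with eigenvalue λ_2, unit length, together with convex coefficients a_i ≥ 0 summing to 1 and a constant c > 0 such that ∑_{i=1}^r a_i (φ_i(u) - φ_i(v))² = c for every edge uv ∈ E, then for all nonnegative edge weights w with ∑_{uv∈E} w_{uv} = |E| one has λ_2(w) ≤ λ_2. -/
open Finset Matrix

variable {V : Type*} [Fintype V] [DecidableEq V]

/-- The edge-energy of `φ` on an edge, `(φ(u) - φ(v))²`. -/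
noncomputable def ell (φ : V → ℝ) : Sym2 V → ℝ :=
  Sym2.lift ⟨fun u v => (φ u - φ v) ^ 2, fun u v => by ring⟩

set_option linter.unusedSectionVars false in
lemma ell_mk (φ : V → ℝ) (u v : V) : ell φ s(u, v) = (φ u - φ v) ^ 2 := rfl

lemma sum_adj_eq_two_mul (G : SimpleGraph V) [DecidableRel G.Adj] (f : Sym2 V → ℝ) :
    ∑ u, ∑ v, (if G.Adj u v then f s(u, v) else 0) = 2 * ∑ e ∈ G.edgeFinset, f e := by
  classical
  have h1 : ∑ u, ∑ v, (if G.Adj u v then f s(u, v) else 0)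
      = ∑ p ∈ (univ ×ˢ univ).filter (fun p : V × V => G.Adj p.1 p.2), f s(p.1, p.2) := by
    rw [Finset.sum_filter, ← Finset.sum_product']
  rw [h1, ← Finset.sum_fiberwise_of_maps_to (g := fun p : V × V => s(p.1, p.2)) (t := G.edgeFinset)
    (fun p hp => by simpa [SimpleGraph.mem_edgeFinset] using (Finset.mem_filter.mp hp).2)]
  rw [Finset.mul_sum]
  refine Finset.sum_congr rfl fun e he => ?_
  rw [Finset.sum_congr rfl (fun p hp => by rw [(Finset.mem_filter.mp hp).2])]
  rw [Finset.sum_const]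
  induction e using Sym2.ind with
  | _ u v =>
    have hadj : G.Adj u v := by simpa [SimpleGraph.mem_edgeFinset] using he
    have hne : u ≠ v := hadj.ne
    have hfib : Finset.filter (fun p => s(p.1, p.2) = s(u, v))
        ((univ ×ˢ univ).filter (fun p : V × V => G.Adj p.1 p.2)) = {(u, v), (v, u)} := by
      ext ⟨x, y⟩
      simp only [Finset.mem_filter, Finset.mem_insert, Finset.mem_singleton,
        Finset.mem_product, Finset.mem_univ, true_and, Sym2.eq_iff, Prod.mk.injEq]
      constructor
      · rintro ⟨_, h⟩; exact h
      · rintro (⟨hx, hy⟩ | ⟨hx, hy⟩)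
        · subst hx; subst hy; exact ⟨hadj, Or.inl ⟨rfl, rfl⟩⟩
        · subst hx; subst hy; exact ⟨hadj.symm, Or.inr ⟨rfl, rfl⟩⟩
    rw [hfib]
    rw [Finset.card_insert_of_notMem (by simp [Prod.ext_iff, hne]), Finset.card_singleton]
    simp [two_smul, two_mul]

/-- The weighted Laplacian `L(w) = D(w) - A(w)` of edge weights `w`. -/
noncomputable def wLap (G : SimpleGraph V) [DecidableRel G.Adj] (w : Sym2 V → ℝ) :
    Matrix V V ℝ :=
  Matrix.diagonal (fun u => ∑ x ∈ G.neighborFinset u, w s(u, x)) -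
    Matrix.of (fun u v => if G.Adj u v then w s(u, v) else 0)

lemma quad (G : SimpleGraph V) [DecidableRel G.Adj] (w : Sym2 V → ℝ) (φ : V → ℝ) :
    φ ⬝ᵥ (wLap G w *ᵥ φ) = ∑ e ∈ G.edgeFinset, w e * ell φ e := by
  classical
  have hdiag : ∀ u, (∑ x ∈ G.neighborFinset u, w s(u, x))
      = ∑ v, (if G.Adj u v then w s(u, v) else 0) := by
    intro u
    rw [SimpleGraph.neighborFinset_eq_filter, Finset.sum_filter]
  have hmv : ∀ u, (wLap G w *ᵥ φ) u = ∑ v, (if G.Adj u v then w s(u, v) * (φ u - φ v) else 0) := by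
    intro u
    have h2 : (Matrix.of (fun u v => if G.Adj u v then w s(u, v) else 0) *ᵥ φ) u
        = ∑ v, (if G.Adj u v then w s(u, v) else 0) * φ v := by
      simp [mulVec, dotProduct]
    rw [wLap, sub_mulVec, Pi.sub_apply, mulVec_diagonal, hdiag, h2]
    rw [Finset.sum_mul, ← Finset.sum_sub_distrib]
    refine Finset.sum_congr rfl fun v _ => ?_
    by_cases h : G.Adj u v <;> simp [h] <;> ring
  have hform : φ ⬝ᵥ (wLap G w *ᵥ φ)
      = ∑ u, ∑ v, (if G.Adj u v then w s(u, v) * (φ u * φ u - φ u * φ v) else 0) := by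
    simp only [dotProduct, hmv, Finset.mul_sum]
    refine Finset.sum_congr rfl fun u _ => Finset.sum_congr rfl fun v _ => ?_
    by_cases h : G.Adj u v <;> simp [h] <;> ring
  have hswap : φ ⬝ᵥ (wLap G w *ᵥ φ)
      = ∑ u, ∑ v, (if G.Adj u v then w s(u, v) * (φ v * φ v - φ v * φ u) else 0) := by
    rw [hform, Finset.sum_comm]
    refine Finset.sum_congr rfl fun u _ => Finset.sum_congr rfl fun v _ => ?_
    by_cases h : G.Adj u v
    · rw [if_pos h, if_pos h.symm, Sym2.eq_swap]
    · rw [if_neg h, if_neg fun h' => h h'.symm]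
  have key : 2 * (φ ⬝ᵥ (wLap G w *ᵥ φ))
      = ∑ u, ∑ v, (if G.Adj u v then w s(u, v) * ell φ s(u, v) else 0) := by
    rw [two_mul]
    nth_rewrite 1 [hform]
    nth_rewrite 1 [hswap]
    rw [← Finset.sum_add_distrib]
    refine Finset.sum_congr rfl fun u _ => ?_
    rw [← Finset.sum_add_distrib]
    refine Finset.sum_congr rfl fun v _ => ?_
    by_cases h : G.Adj u v <;> simp [h, ell_mk] <;> ring
  have := sum_adj_eq_two_mul G (fun e => w e * ell φ e)
  linarith [key, this]

/-- The second-smallest eigenvalue of the weighted Laplacian. -/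
noncomputable def lam2 (G : SimpleGraph V) [DecidableRel G.Adj] (w : Sym2 V → ℝ) : ℝ :=
  sInf {r | ∃ φ : V → ℝ, (∑ v, φ v) = 0 ∧ (∑ v, φ v ^ 2) = 1 ∧
    r = φ ⬝ᵥ (wLap G w *ᵥ φ)}

lemma wLap_one (G : SimpleGraph V) [DecidableRel G.Adj] :
    wLap G (fun _ => (1 : ℝ)) = G.lapMatrix ℝ := by
  have hd : (fun u => ∑ x ∈ G.neighborFinset u, (fun _ : Sym2 V => (1 : ℝ)) s(u, x))
      = (fun u => (G.degree u : ℝ)) := by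
    funext u
    rw [Finset.sum_const, SimpleGraph.degree]
    simp
  unfold wLap SimpleGraph.lapMatrix SimpleGraph.degMatrix SimpleGraph.adjMatrix
  rw [hd]

lemma ell_nonneg (φ : V → ℝ) (e : Sym2 V) : 0 ≤ ell φ e := by
  induction e using Sym2.ind with
  | _ u v => exact sq_nonneg _

/-- If there are unit `λ_2`-eigenvectors `φ_1, ..., φ_r`, convex coefficients `a_i`, and
`c > 0` with `∑ a_i (φ_i(u) - φ_i(v))² = c` for every edge, then `λ_2(w) ≤ λ_2` for all
normalized nonnegative edge weights `w`. -/
theorem edge_iso_implies_lower_conformally_rigid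
    (G : SimpleGraph V) [DecidableRel G.Adj] (hG : G.Connected)
    (r : ℕ) (φ : Fin r → V → ℝ) (a : Fin r → ℝ) (c : ℝ)
    (ha : ∀ i, 0 ≤ a i) (hasum : ∑ i, a i = 1) (hc : 0 < c)
    (hunit : ∀ i, ∑ v, φ i v ^ 2 = 1)
    (heig : ∀ i, wLap G (fun _ => 1) *ᵥ φ i = lam2 G (fun _ => 1) • φ i)
    (hiso : ∀ e ∈ G.edgeFinset, ∑ i, a i * ell (φ i) e = c) :
    ∀ w : Sym2 V → ℝ, (∀ e, 0 ≤ w e) →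
      ∑ e ∈ G.edgeFinset, w e = (G.edgeFinset.card : ℝ) →
      lam2 G w ≤ lam2 G (fun _ => 1) := by
  classical
  intro w hw hwsum
  set lam : ℝ := lam2 G (fun _ => 1) with hlamdef
  -- each eigenvector has total ell-energy equal to lam
  have hQ1 : ∀ i, ∑ e ∈ G.edgeFinset, ell (φ i) e = lam := by
    intro i
    have h1 : φ i ⬝ᵥ (wLap G (fun _ => 1) *ᵥ φ i) = lam := by
      rw [heig i, dotProduct_smul]
      have : φ i ⬝ᵥ φ i = 1 := by
        rw [dotProduct]
        simpa [sq] using hunit i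
      rw [this]; simp
    have h2 := quad G (fun _ => 1) (φ i)
    simpa [h1] using h2.symm
  -- lam = c * |E|
  have hlam : lam = c * (G.edgeFinset.card : ℝ) := by
    calc lam = ∑ i, a i * lam := by rw [← Finset.sum_mul, hasum, one_mul]
    _ = ∑ i, a i * ∑ e ∈ G.edgeFinset, ell (φ i) e := by
        refine Finset.sum_congr rfl fun i _ => by rw [hQ1 i]
    _ = ∑ e ∈ G.edgeFinset, ∑ i, a i * ell (φ i) e := by
        simp_rw [Finset.mul_sum]; rw [Finset.sum_comm]
    _ = ∑ e ∈ G.edgeFinset, c := Finset.sum_congr rfl hiso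
    _ = c * (G.edgeFinset.card : ℝ) := by rw [Finset.sum_const, nsmul_eq_mul, mul_comm]
  by_cases hcard : G.edgeFinset = ∅
  · -- no edges: both sets are empty, both lam2 are 0
    haveI : Subsingleton V := by
      constructor
      intro u v
      obtain ⟨p⟩ := hG.preconnected u v
      cases p with
      | nil => rfl
      | cons h _ =>
        exact absurd (SimpleGraph.mem_edgeFinset.mpr ((SimpleGraph.mem_edgeSet G).mpr h)) (by simp [hcard])
    obtain ⟨v0⟩ := hG.nonempty
    have hempty : ∀ w' : Sym2 V → ℝ,
        {r | ∃ ψ : V → ℝ, (∑ v, ψ v) = 0 ∧ (∑ v, ψ v ^ 2) = 1 ∧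
          r = ψ ⬝ᵥ (wLap G w' *ᵥ ψ)} = ∅ := by
      intro w'
      ext x
      simp only [Set.mem_setOf_eq, Set.mem_empty_iff_false, iff_false]
      rintro ⟨ψ, h0, h1, -⟩
      rw [Fintype.sum_subsingleton _ v0] at h0 h1
      rw [h0] at h1
      norm_num at h1
    have e1 : lam2 G w = 0 := by rw [lam2, hempty w, Real.sInf_empty]
    have e2 : lam = 0 := by rw [hlamdef, lam2, hempty _, Real.sInf_empty]
    rw [e1, e2]
  · have hcardpos : 0 < (G.edgeFinset.card : ℝ) := by
      have := Finset.card_pos.mpr (Finset.nonempty_of_ne_empty hcard)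
      exact_mod_cast this
    have hlampos : 0 < lam := by rw [hlam]; positivity
    -- eigenvectors are orthogonal to constants
    have hzero : ∀ i, ∑ v, φ i v = 0 := by
      intro i
      have hL0 : G.lapMatrix ℝ *ᵥ (fun _ => (1 : ℝ)) = 0 :=
        SimpleGraph.lapMatrix_mulVec_const_eq_zero G
      have h1 : (fun _ => (1 : ℝ)) ⬝ᵥ (wLap G (fun _ => 1) *ᵥ φ i) = 0 := by
        rw [wLap_one, dotProduct_mulVec]
        have : (fun _ => (1 : ℝ)) ᵥ* G.lapMatrix ℝ = 0 := by
          have hsymm : (G.lapMatrix ℝ)ᵀ = G.lapMatrix ℝ := G.isSymm_lapMatrix (R := ℝ)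
          rw [← hsymm, Matrix.vecMul_transpose, hL0]
        rw [this, zero_dotProduct]
      rw [heig i, dotProduct_smul] at h1
      have h2 : (fun _ => (1 : ℝ)) ⬝ᵥ φ i = ∑ v, φ i v := by simp [dotProduct]
      rw [h2] at h1
      exact (mul_eq_zero.mp h1).resolve_left (ne_of_gt hlampos)
  -- weighted quadratic forms average to lam
    have hQw : ∑ i, a i * (φ i ⬝ᵥ (wLap G w *ᵥ φ i)) = lam := by
      calc ∑ i, a i * (φ i ⬝ᵥ (wLap G w *ᵥ φ i))
          = ∑ i, a i * ∑ e ∈ G.edgeFinset, w e * ell (φ i) e := by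
            refine Finset.sum_congr rfl fun i _ => by rw [quad]
        _ = ∑ e ∈ G.edgeFinset, w e * ∑ i, a i * ell (φ i) e := by
            simp_rw [Finset.mul_sum]
            rw [Finset.sum_comm]
            refine Finset.sum_congr rfl fun e _ => Finset.sum_congr rfl fun i _ => by ring
        _ = ∑ e ∈ G.edgeFinset, w e * c := by
            refine Finset.sum_congr rfl fun e he => by rw [hiso e he]
        _ = c * (G.edgeFinset.card : ℝ) := by
            rw [← Finset.sum_mul, hwsum, mul_comm]
        _ = lam := hlam.symm
    -- find a good eigenvector
    have hex : ∃ i, 0 < a i ∧ φ i ⬝ᵥ (wLap G w *ᵥ φ i) ≤ lam := by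
      by_contra hcon
      push_neg at hcon
      have hipos : ∃ i, 0 < a i := by
        by_contra h'
        push_neg at h'
        have : ∀ i ∈ Finset.univ, a i = 0 := fun i _ => le_antisymm (h' i) (ha i)
        rw [Finset.sum_congr rfl this, Finset.sum_const_zero] at hasum
        norm_num at hasum
      obtain ⟨i0, hi0⟩ := hipos
      have hlt : ∑ i, a i * lam < ∑ i, a i * (φ i ⬝ᵥ (wLap G w *ᵥ φ i)) := by
        refine Finset.sum_lt_sum (fun i _ => ?_) ⟨i0, Finset.mem_univ i0, ?_⟩
        · rcases (ha i).eq_or_lt with h | h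
          · rw [← h]; simp
          · exact mul_le_mul_of_nonneg_left (hcon i h).le (ha i)
        · exact (mul_lt_mul_iff_right₀ hi0).mpr (hcon i0 hi0)
      rw [← Finset.sum_mul, hasum, one_mul, hQw] at hlt
      exact lt_irrefl _ hlt
    obtain ⟨i, hai, hQi⟩ := hex
    have hbdd : BddBelow {r | ∃ ψ : V → ℝ, (∑ v, ψ v) = 0 ∧ (∑ v, ψ v ^ 2) = 1 ∧
        r = ψ ⬝ᵥ (wLap G w *ᵥ ψ)} := by
      refine ⟨0, ?_⟩
      rintro x ⟨ψ, -, -, rfl⟩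
      rw [quad]
      exact Finset.sum_nonneg fun e _ => mul_nonneg (hw e) (ell_nonneg ψ e)
    have hmem : φ i ⬝ᵥ (wLap G w *ᵥ φ i) ∈ {r | ∃ ψ : V → ℝ, (∑ v, ψ v) = 0 ∧
        (∑ v, ψ v ^ 2) = 1 ∧ r = ψ ⬝ᵥ (wLap G w *ᵥ ψ)} :=
      ⟨φ i, hzero i, hunit i, rfl⟩
    exact le_trans (csInf_le hbdd hmem) hQi
end

section
/- If there exist eigenvectors φ_1, ..., φ_r of the Laplacian L of a graph G with eigenvalue λ_n (the largest), unit length, convex coefficients a_i ≥ 0 summing to 1, and c > 0 with ∑_{i=1}^r a_i (φ_i(u) - φ_i(v))² = c for every edge uv ∈ E, then for all nonnegative edge weights w with ∑_{uv∈E} w_{uv} = |E| one has λ_n(w) ≥ λ_n. -/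
open Finset Matrix

variable {V : Type*} [Fintype V] [DecidableEq V]

/-- The largest eigenvalue of the weighted Laplacian, characterized variationally as the
maximum of `⟨φ, L(w)φ⟩` over unit vectors `φ`. -/
noncomputable def lamN (G : SimpleGraph V) [DecidableRel G.Adj] (w : Sym2 V → ℝ) : ℝ :=
  sSup {r | ∃ φ : V → ℝ, ∑ v, φ v ^ 2 = 1 ∧ r = φ ⬝ᵥ (wLap G w *ᵥ φ)}

lemma sum_dart_edge (G : SimpleGraph V) [DecidableRel G.Adj] (f : Sym2 V → ℝ) :
    ∑ d : G.Dart, f d.edge = 2 * ∑ e ∈ G.edgeFinset, f e := by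
  rw [← Finset.sum_fiberwise_of_maps_to
      (g := SimpleGraph.Dart.edge) (t := G.edgeFinset)
      (fun d _ => by simp [SimpleGraph.mem_edgeFinset]) (fun d => f d.edge),
    Finset.mul_sum]
  refine Finset.sum_congr rfl fun e he => ?_
  rw [Finset.sum_congr rfl (fun d hd => by rw [(Finset.mem_filter.mp hd).2]),
    Finset.sum_const]
  have : #(Finset.univ.filter (fun d : G.Dart => d.edge = e)) = 2 :=
    G.dart_edge_fiber_card e (SimpleGraph.mem_edgeFinset.mp he)
  rw [this]
  push_cast
  ring

lemma sum_dart_fun (G : SimpleGraph V) [DecidableRel G.Adj] (f : V → V → ℝ) :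
    ∑ d : G.Dart, f d.fst d.snd = ∑ u, ∑ v, if G.Adj u v then f u v else 0 := by
  have : ∑ u, ∑ v, (if G.Adj u v then f u v else 0)
      = ∑ p ∈ Finset.univ.filter (fun p : V × V => G.Adj p.1 p.2), f p.1 p.2 := by
    rw [Finset.sum_filter, ← Fintype.sum_prod_type']
  rw [this]
  exact Finset.sum_bij' (fun d _ => d.toProd) (fun p hp => ⟨p, (Finset.mem_filter.mp hp).2⟩)
    (fun d _ => by simp [d.adj]) (fun p hp => Finset.mem_univ _)
    (fun d _ => rfl) (fun p hp => rfl) (fun d _ => rfl)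

lemma wLap_quad (G : SimpleGraph V) [DecidableRel G.Adj] (w : Sym2 V → ℝ) (ψ : V → ℝ) :
    ψ ⬝ᵥ (wLap G w *ᵥ ψ) = ∑ e ∈ G.edgeFinset, w e * ell ψ e := by
  have lhs_eq : ψ ⬝ᵥ (wLap G w *ᵥ ψ)
      = ∑ u, ∑ v, if G.Adj u v then w s(u,v) * (ψ u ^ 2 - ψ u * ψ v) else 0 := by
    show ∑ u, ψ u * (wLap G w *ᵥ ψ) u = _
    refine Finset.sum_congr rfl fun u _ => ?_
    show ψ u * ∑ v, wLap G w u v * ψ v = _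
    have expand : ∀ v, wLap G w u v * ψ v
        = (if u = v then (∑ x ∈ G.neighborFinset u, w s(u,x)) * ψ v else 0)
          - (if G.Adj u v then w s(u,v) * ψ v else 0) := by
      intro v
      simp only [wLap, Matrix.sub_apply, Matrix.diagonal_apply, Matrix.of_apply]
      by_cases h : u = v <;> by_cases h2 : G.Adj u v <;> simp [h, h2] <;> ring
    simp_rw [expand]
    rw [Finset.sum_sub_distrib, Finset.sum_ite_eq, if_pos (Finset.mem_univ u),
      SimpleGraph.neighborFinset_eq_filter, Finset.sum_filter, Finset.sum_mul,
      ← Finset.sum_sub_distrib, Finset.mul_sum]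
    refine Finset.sum_congr rfl fun v _ => ?_
    by_cases h : G.Adj u v <;> simp [h] <;> ring
  have rhs_eq : 2 * ∑ e ∈ G.edgeFinset, w e * ell ψ e
      = ∑ u, ∑ v, if G.Adj u v then w s(u,v) * (ψ u - ψ v) ^ 2 else 0 := by
    rw [← sum_dart_edge G (fun e => w e * ell ψ e),
      ← sum_dart_fun G (fun u v => w s(u,v) * (ψ u - ψ v) ^ 2)]
    rfl
  have key : 2 * (ψ ⬝ᵥ (wLap G w *ᵥ ψ)) = 2 * ∑ e ∈ G.edgeFinset, w e * ell ψ e := by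
    rw [rhs_eq, lhs_eq, two_mul]
    nth_rewrite 2 [Finset.sum_comm]
    rw [← Finset.sum_add_distrib]
    refine Finset.sum_congr rfl fun u _ => ?_
    rw [← Finset.sum_add_distrib]
    refine Finset.sum_congr rfl fun v _ => ?_
    by_cases h : G.Adj u v
    · have h' : G.Adj v u := h.symm
      have hs : s(v,u) = s(u,v) := Sym2.eq_swap
      simp only [h, h', if_true, hs]
      ring
    · have h' : ¬ G.Adj v u := fun hh => h hh.symm
      simp [h, h']
  linarith

/-- If there are unit `λ_n`-eigenvectors `φ_1, ..., φ_r`, convex coefficients `a_i`, and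
`c > 0` with `∑ a_i (φ_i(u) - φ_i(v))² = c` for every edge, then `λ_n(w) ≥ λ_n` for all
normalized nonnegative edge weights `w`. -/
theorem edge_iso_implies_upper_conformally_rigid
    (G : SimpleGraph V) [DecidableRel G.Adj] (hG : G.Connected)
    (r : ℕ) (φ : Fin r → V → ℝ) (a : Fin r → ℝ) (c : ℝ)
    (ha : ∀ i, 0 ≤ a i) (hasum : ∑ i, a i = 1) (hc : 0 < c)
    (hunit : ∀ i, ∑ v, φ i v ^ 2 = 1)
    (heig : ∀ i, wLap G (fun _ => 1) *ᵥ φ i = lamN G (fun _ => 1) • φ i)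
    (hiso : ∀ e ∈ G.edgeFinset, ∑ i, a i * ell (φ i) e = c) :
    ∀ w : Sym2 V → ℝ, (∀ e, 0 ≤ w e) →
      ∑ e ∈ G.edgeFinset, w e = (G.edgeFinset.card : ℝ) →
      lamN G (fun _ => 1) ≤ lamN G w := by
  intro w hw hwsum
  set lam := lamN G (fun _ => 1) with hlam
  have hq1 : ∀ i, ∑ e ∈ G.edgeFinset, ell (φ i) e = lam := by
    intro i
    have hφφ : φ i ⬝ᵥ φ i = (1:ℝ) := by simpa [dotProduct, sq] using hunit i
    have h1 : φ i ⬝ᵥ (wLap G (fun _ => 1) *ᵥ φ i) = lam := by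
      rw [heig i, dotProduct_smul, smul_eq_mul, hφφ, mul_one]
    rw [← h1, wLap_quad]
    exact Finset.sum_congr rfl fun e _ => (one_mul _).symm
  have hlamE : lam = c * G.edgeFinset.card := by
    calc lam = ∑ i, a i * lam := by rw [← Finset.sum_mul, hasum, one_mul]
      _ = ∑ i, a i * ∑ e ∈ G.edgeFinset, ell (φ i) e := by simp_rw [hq1]
      _ = ∑ i, ∑ e ∈ G.edgeFinset, a i * ell (φ i) e := by simp_rw [Finset.mul_sum]
      _ = ∑ e ∈ G.edgeFinset, ∑ i, a i * ell (φ i) e := Finset.sum_comm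
      _ = ∑ e ∈ G.edgeFinset, c := Finset.sum_congr rfl hiso
      _ = c * G.edgeFinset.card := by rw [Finset.sum_const, nsmul_eq_mul]; ring
  have havg : ∑ i, a i * (φ i ⬝ᵥ (wLap G w *ᵥ φ i)) = lam := by
    calc ∑ i, a i * (φ i ⬝ᵥ (wLap G w *ᵥ φ i))
        = ∑ i, a i * ∑ e ∈ G.edgeFinset, w e * ell (φ i) e := by simp_rw [wLap_quad]
      _ = ∑ i, ∑ e ∈ G.edgeFinset, a i * (w e * ell (φ i) e) := by simp_rw [Finset.mul_sum]
      _ = ∑ e ∈ G.edgeFinset, ∑ i, a i * (w e * ell (φ i) e) := Finset.sum_comm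
      _ = ∑ e ∈ G.edgeFinset, w e * ∑ i, a i * ell (φ i) e := by
          refine Finset.sum_congr rfl fun e _ => ?_
          rw [Finset.mul_sum]
          exact Finset.sum_congr rfl fun i _ => by ring
      _ = ∑ e ∈ G.edgeFinset, w e * c := Finset.sum_congr rfl fun e he => by rw [hiso e he]
      _ = c * ∑ e ∈ G.edgeFinset, w e := by rw [← Finset.sum_mul]; ring
      _ = lam := by rw [hwsum, ← hlamE]
  have hex : ∃ i, lam ≤ φ i ⬝ᵥ (wLap G w *ᵥ φ i) := by
    by_contra hcon
    push_neg at hcon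
    obtain ⟨i0, hi0⟩ : ∃ i, 0 < a i := by
      by_contra h
      push_neg at h
      have h0 : ∑ i, a i = 0 := Finset.sum_eq_zero fun i _ => le_antisymm (h i) (ha i)
      rw [hasum] at h0; norm_num at h0
    have hlt : ∑ i, a i * (φ i ⬝ᵥ (wLap G w *ᵥ φ i)) < ∑ i, a i * lam := by
      apply Finset.sum_lt_sum
      · exact fun i _ => mul_le_mul_of_nonneg_left (le_of_lt (hcon i)) (ha i)
      · exact ⟨i0, Finset.mem_univ _, mul_lt_mul_of_pos_left (hcon i0) hi0⟩
    rw [havg, ← Finset.sum_mul, hasum, one_mul] at hlt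
    exact lt_irrefl _ hlt
  obtain ⟨i, hi⟩ := hex
  have hbdd : BddAbove {r' : ℝ | ∃ ψ : V → ℝ, ∑ v, ψ v ^ 2 = 1 ∧ r' = ψ ⬝ᵥ (wLap G w *ᵥ ψ)} := by
    refine ⟨4 * ∑ e ∈ G.edgeFinset, w e, fun x hx => ?_⟩
    obtain ⟨ψ, hψ, rfl⟩ := hx
    rw [wLap_quad]
    calc ∑ e ∈ G.edgeFinset, w e * ell ψ e ≤ ∑ e ∈ G.edgeFinset, w e * 4 := by
          refine Finset.sum_le_sum fun e _ => ?_
          refine mul_le_mul_of_nonneg_left ?_ (hw e)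
          induction e using Sym2.ind with
          | _ u v =>
            have hu : ψ u ^ 2 ≤ 1 := by
              rw [← hψ]; exact Finset.single_le_sum (fun x _ => sq_nonneg (ψ x)) (Finset.mem_univ u)
            have hv : ψ v ^ 2 ≤ 1 := by
              rw [← hψ]; exact Finset.single_le_sum (fun x _ => sq_nonneg (ψ x)) (Finset.mem_univ v)
            show (ψ u - ψ v) ^ 2 ≤ 4
            nlinarith [sq_nonneg (ψ u + ψ v)]
      _ = 4 * ∑ e ∈ G.edgeFinset, w e := by rw [← Finset.sum_mul]; ring
  have hmem : φ i ⬝ᵥ (wLap G w *ᵥ φ i)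
      ∈ {r' : ℝ | ∃ ψ : V → ℝ, ∑ v, ψ v ^ 2 = 1 ∧ r' = ψ ⬝ᵥ (wLap G w *ᵥ ψ)} :=
    ⟨φ i, hunit i, rfl⟩
  exact hi.trans (le_csSup hbdd hmem)
end

section
/- Every finite connected regular bipartite graph G is upper conformally rigid: for all nonnegative edge weights w with ∑_{uv∈E} w_{uv} = |E|, the largest eigenvalue satisfies λ_n(w) ≥ λ_n(𝟙). -/
open Finset Matrix

variable {V : Type*} [Fintype V] [DecidableEq V]

lemma sum_neighborFinset_swap (G : SimpleGraph V) [DecidableRel G.Adj] (f : V → V → ℝ) :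
    ∑ u, ∑ v ∈ G.neighborFinset u, f u v = ∑ u, ∑ v ∈ G.neighborFinset u, f v u := by
  have h : ∀ g : V → V → ℝ, ∑ u, ∑ v ∈ G.neighborFinset u, g u v
      = ∑ u, ∑ v, if G.Adj u v then g u v else 0 := by
    intro g
    refine Finset.sum_congr rfl fun u _ => ?_
    rw [SimpleGraph.neighborFinset_eq_filter, Finset.sum_filter]
  rw [h, h, Finset.sum_comm]
  refine Finset.sum_congr rfl fun u _ => Finset.sum_congr rfl fun v _ => ?_
  simp [SimpleGraph.adj_comm]

lemma sum_darts_eq (G : SimpleGraph V) [DecidableRel G.Adj] (F : Sym2 V → ℝ) :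
    ∑ d : G.Dart, F d.edge = ∑ u, ∑ v ∈ G.neighborFinset u, F s(u, v) := by
  rw [← Finset.sum_fiberwise_of_maps_to (g := fun d : G.Dart => d.fst)
      (t := (univ : Finset V)) (fun d _ => mem_univ _)]
  refine Finset.sum_congr rfl fun u _ => ?_
  have h1 : ({d : G.Dart | d.fst = u} : Finset _)
      = univ.image (G.dartOfNeighborSet u) := G.dart_fst_fiber u
  have h1' : (univ.filter fun d : G.Dart => d.fst = u)
      = univ.image (G.dartOfNeighborSet u) := h1
  rw [h1', Finset.sum_image (fun x _ y _ h => G.dartOfNeighborSet_injective u h)]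
  have : ∑ x : G.neighborSet u, F (G.dartOfNeighborSet u x).edge
      = ∑ x : G.neighborSet u, F s(u, (x : V)) := rfl
  rw [this, Finset.sum_set_coe (f := fun x => F s(u, x))]
  rfl

lemma sum_edges_double (G : SimpleGraph V) [DecidableRel G.Adj] (F : Sym2 V → ℝ) :
    ∑ u, ∑ v ∈ G.neighborFinset u, F s(u, v) = 2 * ∑ e ∈ G.edgeFinset, F e := by
  rw [← sum_darts_eq]
  rw [← Finset.sum_fiberwise_of_maps_to (g := SimpleGraph.Dart.edge)
      (t := G.edgeFinset) (fun d _ => by rw [SimpleGraph.mem_edgeFinset]; exact d.edge_mem)]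
  rw [Finset.mul_sum]
  refine Finset.sum_congr rfl fun e he => ?_
  have hc : ({d : G.Dart | d.edge = e} : Finset _).card = 2 :=
    G.dart_edge_fiber_card e (SimpleGraph.mem_edgeFinset.mp he)
  calc ∑ d ∈ univ.filter fun d : G.Dart => d.edge = e, F d.edge
      = ∑ _d ∈ univ.filter fun d : G.Dart => d.edge = e, F e := by
        refine Finset.sum_congr rfl fun d hd => ?_
        rw [(Finset.mem_filter.mp hd).2]
    _ = 2 * F e := by rw [Finset.sum_const, hc]; ring

lemma quad_form (G : SimpleGraph V) [DecidableRel G.Adj] (w : Sym2 V → ℝ) (φ : V → ℝ) :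
    φ ⬝ᵥ (wLap G w *ᵥ φ)
      = ∑ u, ∑ v ∈ G.neighborFinset u, w s(u, v) * (φ u ^ 2 - φ u * φ v) := by
  unfold wLap
  simp only [dotProduct, mulVec, Matrix.sub_apply, diagonal, Matrix.of_apply, dotProduct]
  refine Finset.sum_congr rfl fun u _ => ?_
  have key : ∀ v, ((if u = v then ∑ x ∈ G.neighborFinset u, w s(u, x) else 0)
        - if G.Adj u v then w s(u, v) else 0) * φ v
      = (if u = v then (∑ x ∈ G.neighborFinset u, w s(u, x)) * φ v else 0)
        - (if G.Adj u v then w s(u, v) * φ v else 0) := by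
    intro v; split_ifs <;> ring
  have h1 : ∑ v, ((if u = v then ∑ x ∈ G.neighborFinset u, w s(u, x) else 0)
        - if G.Adj u v then w s(u, v) else 0) * φ v
      = (∑ x ∈ G.neighborFinset u, w s(u, x)) * φ u
        - ∑ v ∈ G.neighborFinset u, w s(u, v) * φ v := by
    simp only [key]
    rw [Finset.sum_sub_distrib]
    congr 1
    · rw [Finset.sum_ite_eq, if_pos (mem_univ u)]
    · rw [SimpleGraph.neighborFinset_eq_filter, Finset.sum_filter]
  rw [h1, mul_sub, Finset.sum_mul, Finset.mul_sum, Finset.mul_sum, ← Finset.sum_sub_distrib]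
  exact Finset.sum_congr rfl fun v _ => by ring

lemma two_quad (G : SimpleGraph V) [DecidableRel G.Adj] (w : Sym2 V → ℝ) (φ : V → ℝ) :
    2 * (φ ⬝ᵥ (wLap G w *ᵥ φ))
      = ∑ u, ∑ v ∈ G.neighborFinset u, w s(u, v) * (φ u - φ v) ^ 2 := by
  have hswap := sum_neighborFinset_swap G
    (fun u v => w s(u, v) * (φ u ^ 2 - φ u * φ v))
  calc 2 * (φ ⬝ᵥ (wLap G w *ᵥ φ))
      = (∑ u, ∑ v ∈ G.neighborFinset u, w s(u, v) * (φ u ^ 2 - φ u * φ v))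
        + ∑ u, ∑ v ∈ G.neighborFinset u, w s(v, u) * (φ v ^ 2 - φ v * φ u) := by
        rw [quad_form, ← hswap]; ring
    _ = ∑ u, ∑ v ∈ G.neighborFinset u, w s(u, v) * (φ u - φ v) ^ 2 := by
        rw [← Finset.sum_add_distrib]
        refine Finset.sum_congr rfl fun u _ => ?_
        rw [← Finset.sum_add_distrib]
        refine Finset.sum_congr rfl fun v _ => ?_
        rw [Sym2.eq_swap]; ring

/-- Every finite connected regular bipartite graph is upper conformally rigid:
`λ_n(w) ≥ λ_n(𝟙)` for all normalized nonnegative edge weights `w`. -/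
theorem regular_bipartite_upper_conformally_rigid
    (G : SimpleGraph V) [DecidableRel G.Adj] (hG : G.Connected) (d : ℕ)
    (hreg : G.IsRegularOfDegree d) (s : Set V)
    (hbip : ∀ u v, G.Adj u v → (u ∈ s ↔ v ∉ s)) :
    ∀ w : Sym2 V → ℝ, (∀ e, 0 ≤ w e) →
      ∑ e ∈ G.edgeFinset, w e = (G.edgeFinset.card : ℝ) →
      lamN G (fun _ => 1) ≤ lamN G w := by
  intro w hw hsum
  classical
  haveI : Nonempty V := hG.nonempty
  have hn0 : 0 < Fintype.card V := Fintype.card_pos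
  have hnR : (0 : ℝ) < (Fintype.card V : ℝ) := by exact_mod_cast hn0
  -- each φ u ^ 2 ≤ 1 when normalized
  have hsq1 : ∀ (φ : V → ℝ), (∑ v, φ v ^ 2 = 1) → ∀ u, φ u ^ 2 ≤ 1 := by
    intro φ hφ u
    rw [← hφ]
    exact Finset.single_le_sum (fun v _ => sq_nonneg (φ v)) (mem_univ u)
  -- bounded above for nonnegative weights
  have hbdd : ∀ w' : Sym2 V → ℝ, (∀ e, 0 ≤ w' e) →
      BddAbove {r | ∃ φ : V → ℝ, ∑ v, φ v ^ 2 = 1 ∧ r = φ ⬝ᵥ (wLap G w' *ᵥ φ)} := by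
    intro w' hw'
    refine ⟨2 * ∑ u, ∑ v ∈ G.neighborFinset u, w' s(u, v), ?_⟩
    rintro r ⟨φ, hφ, rfl⟩
    have h2 : 2 * (φ ⬝ᵥ (wLap G w' *ᵥ φ))
        ≤ ∑ u, ∑ v ∈ G.neighborFinset u, w' s(u, v) * 4 := by
      rw [two_quad]
      refine Finset.sum_le_sum fun u _ => Finset.sum_le_sum fun v _ => ?_
      have h1 := hsq1 φ hφ u
      have h2 := hsq1 φ hφ v
      have hws := hw' s(u, v)
      nlinarith [sq_nonneg (φ u + φ v)]
    have : ∑ u, ∑ v ∈ G.neighborFinset u, w' s(u, v) * 4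
        = 4 * ∑ u, ∑ v ∈ G.neighborFinset u, w' s(u, v) := by
      rw [Finset.mul_sum]; exact Finset.sum_congr rfl fun u _ => by
        rw [Finset.mul_sum]; exact Finset.sum_congr rfl fun v _ => by ring
    linarith
  -- handshake for regular graphs
  have hhs : (Fintype.card V : ℝ) * d = 2 * (G.edgeFinset.card : ℝ) := by
    have h := G.sum_degrees_eq_twice_card_edges
    have h2 : ∑ v, G.degree v = Fintype.card V * d := by
      rw [Finset.sum_congr rfl fun v _ => hreg v, Finset.sum_const, card_univ,
        smul_eq_mul]
    rw [h2] at h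
    exact_mod_cast h
  -- Part 1 : lamN 1 ≤ 2 d
  have part1 : lamN G (fun _ => 1) ≤ 2 * d := by
    refine Real.sSup_le ?_ (by positivity)
    rintro r ⟨φ, hφ, rfl⟩
    have hdeg : ∀ u, (G.neighborFinset u).card = d := fun u => hreg u
    have hA : ∑ u, ∑ v ∈ G.neighborFinset u, φ u ^ 2 = d := by
      calc ∑ u, ∑ v ∈ G.neighborFinset u, φ u ^ 2
          = ∑ u, (d : ℝ) * φ u ^ 2 := by
            refine Finset.sum_congr rfl fun u _ => ?_
            rw [Finset.sum_const, hdeg u, nsmul_eq_mul]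
        _ = (d : ℝ) * ∑ u, φ u ^ 2 := by rw [Finset.mul_sum]
        _ = d := by rw [hφ, mul_one]
    have hB : ∑ u, ∑ v ∈ G.neighborFinset u, φ v ^ 2 = d := by
      rw [sum_neighborFinset_swap G (fun u v => φ v ^ 2)]
      exact hA
    have h2 : 2 * (φ ⬝ᵥ (wLap G (fun _ => 1) *ᵥ φ))
        ≤ ∑ u, ∑ v ∈ G.neighborFinset u, (2 * φ u ^ 2 + 2 * φ v ^ 2) := by
      rw [two_quad]
      refine Finset.sum_le_sum fun u _ => Finset.sum_le_sum fun v _ => ?_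
      nlinarith [sq_nonneg (φ u + φ v)]
    have h3 : ∑ u, ∑ v ∈ G.neighborFinset u, (2 * φ u ^ 2 + 2 * φ v ^ 2)
        = 4 * (d : ℝ) := by
      calc ∑ u, ∑ v ∈ G.neighborFinset u, (2 * φ u ^ 2 + 2 * φ v ^ 2)
          = 2 * (∑ u, ∑ v ∈ G.neighborFinset u, φ u ^ 2)
            + 2 * (∑ u, ∑ v ∈ G.neighborFinset u, φ v ^ 2) := by
            rw [Finset.mul_sum, Finset.mul_sum, ← Finset.sum_add_distrib]
            refine Finset.sum_congr rfl fun u _ => ?_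
            rw [Finset.mul_sum, Finset.mul_sum, ← Finset.sum_add_distrib]
        _ = 4 * (d : ℝ) := by rw [hA, hB]; ring
    linarith
  -- Part 2 : 2 d ≤ lamN w
  have part2 : (2 * d : ℝ) ≤ lamN G w := by
    set c : ℝ := (Real.sqrt (Fintype.card V : ℝ))⁻¹ with hc
    have hc2 : c ^ 2 = ((Fintype.card V : ℝ))⁻¹ := by
      rw [hc, ← Real.sqrt_inv, Real.sq_sqrt (by positivity)]
    set φ : V → ℝ := fun v => if v ∈ s then c else -c with hφdef
    have hφsq : ∀ v, φ v ^ 2 = ((Fintype.card V : ℝ))⁻¹ := by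
      intro v
      by_cases h : v ∈ s <;> simp [hφdef, h, hc2]
    have hnorm : ∑ v, φ v ^ 2 = 1 := by
      rw [Finset.sum_congr rfl fun v _ => hφsq v, Finset.sum_const, card_univ,
        nsmul_eq_mul]
      field_simp
    have hdiff : ∀ u v, G.Adj u v → (φ u - φ v) ^ 2 = 4 * ((Fintype.card V : ℝ))⁻¹ := by
      intro u v huv
      by_cases h : u ∈ s
      · have hv : v ∉ s := (hbip u v huv).mp h
        simp only [hφdef, if_pos h, if_neg hv]
        rw [show c - -c = 2 * c by ring, mul_pow, hc2]; norm_num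
      · have hv : v ∈ s := by
          by_contra hv
          exact h ((hbip u v huv).mpr hv)
        simp only [hφdef, if_neg h, if_pos hv]
        rw [show -c - c = -(2 * c) by ring, neg_pow, mul_pow, hc2]; norm_num
    have hQ : φ ⬝ᵥ (wLap G w *ᵥ φ) = 2 * d := by
      have h2 : 2 * (φ ⬝ᵥ (wLap G w *ᵥ φ))
          = ∑ u, ∑ v ∈ G.neighborFinset u, w s(u, v) * (4 * ((Fintype.card V : ℝ))⁻¹) := by
        rw [two_quad]
        refine Finset.sum_congr rfl fun u _ => Finset.sum_congr rfl fun v hv => ?_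
        rw [hdiff u v ((SimpleGraph.mem_neighborFinset _ _ _).mp hv)]
      have h3 : ∑ u, ∑ v ∈ G.neighborFinset u, w s(u, v) * (4 * ((Fintype.card V : ℝ))⁻¹)
          = (4 * ((Fintype.card V : ℝ))⁻¹) * ∑ u, ∑ v ∈ G.neighborFinset u, w s(u, v) := by
        rw [Finset.mul_sum]
        refine Finset.sum_congr rfl fun u _ => ?_
        rw [Finset.mul_sum]
        exact Finset.sum_congr rfl fun v _ => by ring
      have h4 := sum_edges_double G w
      have h6 : (4 * ((Fintype.card V : ℝ))⁻¹) * (2 * (G.edgeFinset.card : ℝ)) = 4 * d := by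
        rw [← hhs]
        field_simp
      have h5 : 2 * (φ ⬝ᵥ (wLap G w *ᵥ φ)) = 4 * (d : ℝ) := by
        rw [h2, h3, h4, hsum, h6]
      linarith
    refine le_csSup (hbdd w hw) ?_
    exact ⟨φ, hnorm, hQ.symm⟩
  calc lamN G (fun _ => 1) ≤ 2 * d := part1
    _ ≤ lamN G w := part2
end
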